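/- With Q_k ∈ ℤ/2[b] defined by Q_{-1}=0, Q_0=1, Q_k = b·Q_{k-1}+Q_{k-2}, for every p ≥ 2 the element 1 + Q_{p-2}(b) + Q_{p-1}(b)² equals (1 + Q_p(b))·Q_{p-2}(b) in ℤ/2[b]. -/
import Mathlib


open Polynomial

/-- With Q_{-1}=0, Q_0=1, Q_k = b·Q_{k-1}+Q_{k-2} in ℤ/2[b], for every p ≥ 2,
1 + Q_{p-2} + Q_{p-1}² = (1 + Q_p)·Q_{p-2}. -/
theorem stmt4 (Q : ℤ → Polynomial (ZMod 2))
    (hneg : Q (-1) = 0) (h0 : Q 0 = 1)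
    (hrec : ∀ k : ℤ, 1 ≤ k → Q k = X * Q (k - 1) + Q (k - 2)) :
    ∀ p : ℤ, 2 ≤ p →
      1 + Q (p - 2) + Q (p - 1) ^ 2 = (1 + Q p) * Q (p - 2) := by
  have h2 : (2 : Polynomial (ZMod 2)) = 0 := by
    have := CharP.cast_eq_zero (Polynomial (ZMod 2)) 2
    simpa using this
  have det : ∀ p : ℤ, 0 ≤ p → Q p ^ 2 + Q (p + 1) * Q (p - 1) = 1 := by
    refine Int.le_induction ?_ ?_
    · simp [h0, hneg]
    · intro n hn ih
      have r1 : Q (n + 1) = X * Q n + Q (n - 1) := by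
        have h := hrec (n + 1) (by omega)
        have e1 : n + 1 - 1 = n := by ring
        have e2 : n + 1 - 2 = n - 1 := by ring
        rw [e1, e2] at h; exact h
      have r2 : Q (n + 1 + 1) = X * Q (n + 1) + Q n := by
        have h := hrec (n + 1 + 1) (by omega)
        have e1 : n + 1 + 1 - 1 = n + 1 := by ring
        have e2 : n + 1 + 1 - 2 = n := by ring
        rw [e1, e2] at h; exact h
      have e4 : n + 1 - 1 = n := by ring
      rw [e4, r2, r1]
      rw [r1] at ih
      linear_combination ih + (X ^ 2 * Q n ^ 2 + X * Q n * Q (n - 1)) * h2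
  intro p hp
  have d := det (p - 1) (by omega)
  have e1 : p - 1 + 1 = p := by ring
  have e2 : p - 1 - 1 = p - 2 := by ring
  rw [e1, e2] at d
  linear_combination d + (1 - Q p * Q (p - 2)) * h2
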